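/- Let s : P/G → P/H be any section of the canonical projection π : P/H → P/G (i.e. π ∘ s = id). Then the set Q_s = { p ∈ P : the H-orbit of p equals s(the G-orbit of p) } is a reduced H-subset of P, i.e. Q_s is H-invariant and, for every p ∈ P, the intersection of Q_s with the G-orbit of p is nonempty and equals a single H-orbit. (Set-theoretic core of Theorem 1 on reduction of structure groups.) -/

import Mathlib

/-!
A point `p` lies in `Q_s` exactly when its `H`-orbit is the chosen one, `s [p]_G`. Since
`π ∘ s = id`, an `H`-orbit of the form `s c` lies in the `G`-orbit `c`; hence `Q_s` meets the
`G`-orbit of `p₀` in the points whose `H`-orbit is `s [p₀]_G`, which is one `H`-orbit.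
-/

/-- `Q` is a *reduced H-subset* of `P`: it is `H`-invariant and, for every `p : P`,
its intersection with the `G`-orbit of `p` is nonempty and equals a single `H`-orbit. -/
def IsReducedHSubset {G : Type*} [Group G] (H : Subgroup G) {P : Type*} [MulAction G P]
    (Q : Set P) : Prop :=
  (∀ (ρ : H) (p : P), p ∈ Q → ρ • p ∈ Q) ∧
    ∀ p : P, ∃ q : P, q ∈ Q ∩ MulAction.orbit G p ∧
      Q ∩ MulAction.orbit G p = MulAction.orbit H q

/-- The canonical projection `P/H → P/G` sending an `H`-orbit to the `G`-orbit containing it. -/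
def canonicalProj {G : Type*} [Group G] (H : Subgroup G) (P : Type*) [MulAction G P] :
    Quotient (MulAction.orbitRel H P) → Quotient (MulAction.orbitRel G P) :=
  Quotient.map' id fun _ _ h => by
    obtain ⟨ρ, hρ⟩ := h
    exact ⟨(ρ : G), hρ⟩

namespace MulAction

theorem mk_eq_mk_iff_mem_orbit {M P : Type*} [Group M] [MulAction M P] {x y : P} :
    (Quotient.mk'' x : Quotient (orbitRel M P)) = Quotient.mk'' y ↔ x ∈ orbit M y :=
  Quotient.eq''.trans orbitRel_apply

section OrbitSection

variable {G : Type*} [Group G] {H : Subgroup G} {P : Type*} [MulAction G P]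
  {s : Quotient (orbitRel G P) → Quotient (orbitRel H P)}

/-- The set `Q_s`. -/
def sectionSet (s : Quotient (orbitRel G P) → Quotient (orbitRel H P)) : Set P :=
  {p | (Quotient.mk'' p : Quotient (orbitRel H P)) = s (Quotient.mk'' p)}

theorem smul_mem_sectionSet (ρ : H) {p : P} (hp : p ∈ sectionSet s) :
    ρ • p ∈ sectionSet s := by
  have hH : (Quotient.mk'' (ρ • p) : Quotient (orbitRel H P)) = Quotient.mk'' p :=
    mk_eq_mk_iff_mem_orbit.2 (mem_orbit p ρ)
  have hG : (Quotient.mk'' (ρ • p) : Quotient (orbitRel G P)) = Quotient.mk'' p :=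
    mk_eq_mk_iff_mem_orbit.2 (mem_orbit p (ρ : G))
  simpa only [sectionSet, Set.mem_ofPred_eq, hH, hG] using hp

theorem mk_eq_of_mk_eq_section (hs : canonicalProj H P ∘ s = id) {p : P}
    {c : Quotient (orbitRel G P)} (hp : Quotient.mk'' p = s c) : Quotient.mk'' p = c :=
  calc Quotient.mk'' p = canonicalProj H P (Quotient.mk'' p) := rfl
    _ = c := by rw [hp]; exact congrFun hs c

theorem mem_sectionSet_inter_orbit_iff (hs : canonicalProj H P ∘ s = id) {p p₀ : P} :
    p ∈ sectionSet s ∩ orbit G p₀ ↔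
      (Quotient.mk'' p : Quotient (orbitRel H P)) = s (Quotient.mk'' p₀) := by
  rw [Set.mem_inter_iff, ← mk_eq_mk_iff_mem_orbit]
  constructor
  · rintro ⟨hpQ, hpG⟩
    rwa [sectionSet, Set.mem_ofPred_eq, hpG] at hpQ
  · intro hp
    have hpG := mk_eq_of_mk_eq_section hs hp
    exact ⟨by rwa [sectionSet, Set.mem_ofPred_eq, hpG], hpG⟩

theorem sectionSet_inter_orbit_eq_orbit (hs : canonicalProj H P ∘ s = id) {p₀ q : P}
    (hq : Quotient.mk'' q = s (Quotient.mk'' p₀)) :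
    sectionSet s ∩ orbit G p₀ = orbit H q := by
  ext x
  rw [mem_sectionSet_inter_orbit_iff hs, ← hq, mk_eq_mk_iff_mem_orbit]

end OrbitSection

end MulAction

open MulAction in
theorem reduced_subset_of_section_general {G : Type*} [Group G] (H : Subgroup G)
    {P : Type*} [MulAction G P]
    (s : Quotient (MulAction.orbitRel G P) → Quotient (MulAction.orbitRel H P))
    (hs : canonicalProj H P ∘ s = id) :
    IsReducedHSubset H
      {p : P | (Quotient.mk'' p : Quotient (MulAction.orbitRel H P)) =
        s (Quotient.mk'' p : Quotient (MulAction.orbitRel G P))} := by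
  refine ⟨fun ρ p hp => smul_mem_sectionSet ρ hp, fun p₀ => ?_⟩
  obtain ⟨q, hq⟩ : ∃ q : P, Quotient.mk'' q = s (Quotient.mk'' p₀) := Quotient.exists_rep _
  exact ⟨q, (mem_sectionSet_inter_orbit_iff hs).2 hq, sectionSet_inter_orbit_eq_orbit hs hq⟩

theorem reduced_subset_of_section {G : Type*} [Group G] (H : Subgroup G)
    {P : Type*} [MulAction G P]
    (hfree : ∀ (g : G) (p : P), g • p = p → g = 1)
    (s : Quotient (MulAction.orbitRel G P) → Quotient (MulAction.orbitRel H P))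
    (hs : canonicalProj H P ∘ s = id) :
    IsReducedHSubset H
      {p : P | (Quotient.mk'' p : Quotient (MulAction.orbitRel H P)) =
        s (Quotient.mk'' p : Quotient (MulAction.orbitRel G P))} :=
  reduced_subset_of_section_general H s hs
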